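/- Let n ≥ 3 be an integer and let p be a real number with 0 < p < 1. In the Erdős–Rényi random graph G(n,p), the probability that the minimum degree is at most np/2 is at most 2n·e^{−(n−1)p/48}. -/

import Mathlib

open MeasureTheory

/-- The simple graph on `Fin n` determined by an indicator `ω` of the (unordered) pairs:
`u` and `v` are adjacent iff `u ≠ v` and the pair `{u, v}` is switched on by `ω`. -/
def erdosRenyiGraph (n : ℕ) (ω : Sym2 (Fin n) → Bool) : SimpleGraph (Fin n) where
  Adj u v := u ≠ v ∧ ω s(u, v) = true
  symm := by
    constructor
    intro u v h
    exact ⟨h.1.symm, by rw [Sym2.eq_swap]; exact h.2⟩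
  loopless := by constructor; intro u h; exact h.1 rfl

instance (n : ℕ) (ω : Sym2 (Fin n) → Bool) : DecidableRel (erdosRenyiGraph n ω).Adj :=
  fun u v => inferInstanceAs (Decidable (u ≠ v ∧ ω s(u, v) = true))

/-- The Erdős–Rényi measure: each unordered pair is included independently with
probability `p` (a product of Bernoulli measures). -/
noncomputable def erdosRenyiMeasure (n : ℕ) (p : ℝ) (hp : p ≤ 1) :
    Measure (Sym2 (Fin n) → Bool) :=
  Measure.pi fun _ : Sym2 (Fin n) =>
    (PMF.bernoulli (Real.toNNReal p) (Real.toNNReal_le_one.mpr hp)).toMeasure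

/-!
A vertex of `G(n,p)` has `n - 1` potential neighbours, each present independently with
probability `p`, so its degree is a sum of `n - 1` independent Bernoulli indicators. The lower-tail
Chernoff bound at `t = -1/4` gives
`P(deg v ≤ np/2) ≤ e^{np/8} (1 - p + p e^{-1/4})^{n-1} ≤ exp (np/8 - (n-1) p (1 - e^{-1/4}))`,
and `e^{-1/4} ≤ 32/41` together with `n ≥ 3` bounds the exponent by `-(n-1)p/48`.
A union bound over the `n` vertices finishes the proof.
-/

open ProbabilityTheory Finset Real

noncomputable def bernoulliPi (ι : Type*) [Fintype ι] (q : NNReal) (hq : q ≤ 1) :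
    Measure (ι → Bool) :=
  Measure.pi fun _ : ι => (PMF.bernoulli q hq).toMeasure

def coordIndicator {ι : Type*} (i : ι) (ω : ι → Bool) : ℝ := if ω i then 1 else 0

section BernoulliPi

variable {ι : Type*} [Fintype ι] {q : NNReal} {hq : q ≤ 1}

instance : IsProbabilityMeasure (bernoulliPi ι q hq) :=
  inferInstanceAs (IsProbabilityMeasure (Measure.pi _))

lemma iIndepFun_coordIndicator : iIndepFun coordIndicator (bernoulliPi ι q hq) :=
  iIndepFun_pi (X := fun _ (b : Bool) => if b then (1 : ℝ) else 0) fun _ => .of_discrete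

lemma mgf_coordIndicator (i : ι) (t : ℝ) :
    mgf (coordIndicator i) (bernoulliPi ι q hq) t = 1 - q + q * exp t := by
  refine (integral_comp_eval (X := fun _ : ι => Bool) (i := i)
    (f := fun b : Bool => exp (t * if b then 1 else 0)) .of_discrete).trans ?_
  rw [PMF.integral_eq_sum]
  simp [PMF.bernoulli_apply, hq]
  ring

lemma measureReal_sum_coordIndicator_le (s : Finset ι) (a : ℝ) {t : ℝ} (ht : t ≤ 0) :
    (bernoulliPi ι q hq).real {ω | ∑ i ∈ s, coordIndicator i ω ≤ a} ≤
      exp (-t * a + #s * q * (exp t - 1)) := by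
  have h := measure_le_le_exp_mul_mgf (μ := bernoulliPi ι q hq)
    (X := ∑ i ∈ s, coordIndicator i) a ht .of_finite
  rw [iIndepFun_coordIndicator.mgf_sum (fun _ => .of_discrete)] at h
  simp only [mgf_coordIndicator, prod_const, Finset.sum_apply] at h
  calc _ ≤ exp (-t * a) * (1 - q + q * exp t) ^ #s := h
    _ ≤ exp (-t * a) * exp (q * (exp t - 1)) ^ #s := by
        have : 0 ≤ 1 - (q : ℝ) + q * exp t :=
          add_nonneg (sub_nonneg.2 (NNReal.coe_le_one.2 hq)) (by positivity)
        gcongr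
        exact (add_one_le_exp _).trans_eq' (by ring)
    _ = exp (-t * a + #s * q * (exp t - 1)) := by
        rw [← exp_nat_mul, ← exp_add, mul_assoc]

end BernoulliPi

lemma exp_neg_quarter_le : exp (-(1 / 4)) ≤ 32 / 41 := by
  rw [exp_neg, inv_le_comm₀ (exp_pos _) (by norm_num)]
  linarith [quadratic_le_exp_of_nonneg (x := 1 / 4) (by norm_num)]

lemma chernoff_exponent_le {n p : ℝ} (hn : 3 ≤ n) (hp : 0 ≤ p) :
    1 / 4 * (n * p / 2) + (n - 1) * p * (exp (-(1 / 4)) - 1) ≤ -((n - 1) * p) / 48 := by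
  have := exp_neg_quarter_le
  nlinarith [mul_nonneg (sub_nonneg.2 this) (mul_nonneg (by linarith : (0 : ℝ) ≤ n - 1) hp)]

section ErdosRenyi

variable {n : ℕ}

instance {p : ℝ} {hp : p ≤ 1} : IsProbabilityMeasure (erdosRenyiMeasure n p hp) :=
  inferInstanceAs (IsProbabilityMeasure (bernoulliPi _ _ _))

lemma mem_edgeSet_erdosRenyiGraph {ω : Sym2 (Fin n) → Bool} {e : Sym2 (Fin n)} :
    e ∈ (erdosRenyiGraph n ω).edgeSet ↔ ¬e.IsDiag ∧ ω e := by
  induction e using Sym2.ind with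
  | h u v => simp [erdosRenyiGraph]

lemma incidenceFinset_erdosRenyiGraph (ω : Sym2 (Fin n) → Bool) (v : Fin n) :
    (erdosRenyiGraph n ω).incidenceFinset v =
      {e ∈ (⊤ : SimpleGraph (Fin n)).incidenceFinset v | ω e} := by
  ext e
  simp [SimpleGraph.incidenceSet, mem_edgeSet_erdosRenyiGraph, and_assoc, and_comm]

lemma degree_erdosRenyiGraph (ω : Sym2 (Fin n) → Bool) (v : Fin n) :
    ((erdosRenyiGraph n ω).degree v : ℝ) =
      ∑ e ∈ (⊤ : SimpleGraph (Fin n)).incidenceFinset v, coordIndicator e ω := by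
  rw [← SimpleGraph.card_incidenceFinset_eq_degree, incidenceFinset_erdosRenyiGraph,
    Finset.natCast_card_filter]
  rfl

lemma card_incidenceFinset_top (v : Fin n) :
    #((⊤ : SimpleGraph (Fin n)).incidenceFinset v) = n - 1 := by
  rw [SimpleGraph.card_incidenceFinset_eq_degree, SimpleGraph.complete_graph_degree,
    Fintype.card_fin]

lemma erdosRenyiMeasure_real_degree_le_le (hn : 3 ≤ n) {p : ℝ} (hp0 : 0 ≤ p) (hp1 : p ≤ 1)
    (v : Fin n) :
    (erdosRenyiMeasure n p hp1).real {ω | ((erdosRenyiGraph n ω).degree v : ℝ) ≤ n * p / 2} ≤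
      exp (-((n - 1) * p) / 48) := by
  simp_rw [degree_erdosRenyiGraph]
  refine (measureReal_sum_coordIndicator_le (hq := Real.toNNReal_le_one.mpr hp1) _ _
    (by norm_num : -(1 / 4 : ℝ) ≤ 0)).trans (exp_le_exp.mpr ?_)
  rw [card_incidenceFinset_top, Nat.cast_pred (by omega), Real.coe_toNNReal _ hp0, neg_neg]
  exact chernoff_exponent_le (by exact_mod_cast hn) hp0

end ErdosRenyi

/-- For `n ≥ 3` and `0 < p < 1`, in the random graph `G(n,p)` the
probability that the minimum degree is at most `np/2` is at most `2n·e^{−(n−1)p/48}`. -/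
theorem erdosRenyi_minDegree_prob (n : ℕ) (hn : 3 ≤ n) (p : ℝ)
    (hp0 : 0 < p) (hp1 : p < 1) :
    erdosRenyiMeasure n p hp1.le
        {ω | ((erdosRenyiGraph n ω).minDegree : ℝ) ≤ (n : ℝ) * p / 2} ≤
      ENNReal.ofReal (2 * (n : ℝ) * Real.exp (-(((n : ℝ) - 1) * p) / 48)) := by
  have : Nonempty (Fin n) := ⟨⟨0, by omega⟩⟩
  have hsub : {ω | ((erdosRenyiGraph n ω).minDegree : ℝ) ≤ n * p / 2} ⊆
      ⋃ v, {ω | ((erdosRenyiGraph n ω).degree v : ℝ) ≤ n * p / 2} := fun ω hω => by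
    obtain ⟨v, hv⟩ := (erdosRenyiGraph n ω).exists_minimal_degree_vertex
    exact Set.mem_iUnion.2 ⟨v, by rwa [Set.mem_setOf_eq, ← hv]⟩
  rw [← ofReal_measureReal]
  refine ENNReal.ofReal_le_ofReal ?_
  calc _ ≤ _ := measureReal_mono hsub
    _ ≤ _ := measureReal_iUnion_fintype_le _
    _ ≤ ∑ _v : Fin n, exp (-((n - 1) * p) / 48) :=
        sum_le_sum fun v _ => erdosRenyiMeasure_real_degree_le_le hn hp0.le hp1.le v
    _ ≤ 2 * n * exp (-((n - 1) * p) / 48) := by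
        rw [sum_const, card_univ, Fintype.card_fin, nsmul_eq_mul]
        gcongr
        linarith
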